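/- arXiv:2212.10041 — 6 statements merged into one kernel-verified Lean document; each statement's English description precedes it below -/
import Mathlib

section
/- Let M₁ and M₂ be Γ-semigroups and T : M₁ → P*(M₂) a set-valued anti-homomorphism. For any subsets A₁, A₂ ⊆ M₂, the product of upper approximations is contained in the upper approximation of the product: T̄(A₂) Γ T̄(A₁) ⊆ T̄(A₁ Γ A₂). -/
/-- Product of two subsets of a Γ-semigroup: XΓY = {xγy}. -/
def gprod {M G : Type} (mul : M → G → M → M) (X Y : Set M) : Set M :=
  {z | ∃ x ∈ X, ∃ y ∈ Y, ∃ γ : G, z = mul x γ y}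

/-- Product UαV of two subsets with a fixed γ. -/
def aprod {M G : Type} (mul : M → G → M → M) (U : Set M) (γ : G) (V : Set M) : Set M :=
  {z | ∃ u ∈ U, ∃ v ∈ V, z = mul u γ v}

/-- Upper approximation. -/
def upperApprox {A B : Type} (T : A → Set B) (S : Set B) : Set A :=
  {x | (T x ∩ S).Nonempty}

/-- Lower approximation. -/
def lowerApprox {A B : Type} (T : A → Set B) (S : Set B) : Set A :=
  {x | T x ⊆ S}

theorem stmt4_general {M1 M2 G : Type} (mul1 : M1 → G → M1 → M1) (mul2 : M2 → G → M2 → M2)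
    (T : M1 → Set M2)
    (hanti : ∀ (a b : M1) (α : G), aprod mul2 (T b) α (T a) ⊆ T (mul1 a α b)) (A1 A2 : Set M2) :
    gprod mul1 (upperApprox T A2) (upperApprox T A1) ⊆ upperApprox T (gprod mul2 A1 A2) := by
  rintro _ ⟨x, ⟨a, hax, haA2⟩, y, ⟨b, hby, hbA1⟩, γ, rfl⟩
  exact ⟨mul2 b γ a, hanti x y γ ⟨b, hby, a, hax, rfl⟩, b, hbA1, a, haA2, γ, rfl⟩

theorem stmt4 {M1 M2 G : Type} (mul1 : M1 → G → M1 → M1) (mul2 : M2 → G → M2 → M2)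
    (hG1 : ∀ (a b c : M1) (α β : G), mul1 (mul1 a α b) β c = mul1 a α (mul1 b β c))
    (hG2 : ∀ (a b c : M2) (α β : G), mul2 (mul2 a α b) β c = mul2 a α (mul2 b β c))
    (T : M1 → Set M2) (hT : ∀ x, (T x).Nonempty)
    (hanti : ∀ (a b : M1) (α : G), aprod mul2 (T b) α (T a) ⊆ T (mul1 a α b)) (A1 A2 : Set M2) :
    gprod mul1 (upperApprox T A2) (upperApprox T A1) ⊆ upperApprox T (gprod mul2 A1 A2) :=
  stmt4_general mul1 mul2 T hanti A1 A2
end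

section
/- Let M₁ and M₂ be Γ-semigroups and T : M₁ → P*(M₂) a strong set-valued anti-homomorphism. For any subsets A₁, A₂ ⊆ M₂, the product of lower approximations is contained in the lower approximation of the product: T_(A₂) Γ T_(A₁) ⊆ T_(A₁ Γ A₂). -/
section

variable {M G : Type} (mul : M → G → M → M)

theorem aprod_mono {U U' V V' : Set M} (hU : U ⊆ U') (hV : V ⊆ V') (γ : G) :
    aprod mul U γ V ⊆ aprod mul U' γ V' := by
  rintro _ ⟨u, hu, v, hv, rfl⟩
  exact ⟨u, hU hu, v, hV hv, rfl⟩

theorem aprod_subset_gprod (U : Set M) (γ : G) (V : Set M) :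
    aprod mul U γ V ⊆ gprod mul U V := by
  rintro _ ⟨u, hu, v, hv, rfl⟩
  exact ⟨u, hu, v, hv, γ, rfl⟩

end

theorem stmt5_general {M1 M2 G : Type} (mul1 : M1 → G → M1 → M1) (mul2 : M2 → G → M2 → M2)
    (T : M1 → Set M2)
    (hstrong : ∀ (a b : M1) (α : G), T (mul1 a α b) = aprod mul2 (T b) α (T a)) (A1 A2 : Set M2) :
    gprod mul1 (lowerApprox T A2) (lowerApprox T A1) ⊆ lowerApprox T (gprod mul2 A1 A2) := by
  rintro _ ⟨x, hx, y, hy, γ, rfl⟩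
  show T (mul1 x γ y) ⊆ _
  rw [hstrong]
  exact (aprod_mono mul2 hy hx γ).trans (aprod_subset_gprod mul2 A1 γ A2)

theorem stmt5 {M1 M2 G : Type} (mul1 : M1 → G → M1 → M1) (mul2 : M2 → G → M2 → M2)
    (hG1 : ∀ (a b c : M1) (α β : G), mul1 (mul1 a α b) β c = mul1 a α (mul1 b β c))
    (hG2 : ∀ (a b c : M2) (α β : G), mul2 (mul2 a α b) β c = mul2 a α (mul2 b β c))
    (T : M1 → Set M2) (hT : ∀ x, (T x).Nonempty)
    (hstrong : ∀ (a b : M1) (α : G), T (mul1 a α b) = aprod mul2 (T b) α (T a)) (A1 A2 : Set M2) :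
    gprod mul1 (lowerApprox T A2) (lowerApprox T A1) ⊆ lowerApprox T (gprod mul2 A1 A2) :=
  stmt5_general mul1 mul2 T hstrong A1 A2
end

section
/- Let M₁, M₂ be Γ-semigroups and T : M₁ → P*(M₂) a set-valued anti-homomorphism. If S is a sub-Γ-semigroup of M₂ and T̄(S) is nonempty, then T̄(S) is a sub-Γ-semigroup of M₁. -/
theorem mem_of_mem_of_antiHom {M1 M2 G : Type} {mul1 : M1 → G → M1 → M1}
    {mul2 : M2 → G → M2 → M2} {T : M1 → Set M2}
    (hanti : ∀ (a b : M1) (α : G), aprod mul2 (T b) α (T a) ⊆ T (mul1 a α b))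
    {x y : M1} {tx ty : M2} (htx : tx ∈ T x) (hty : ty ∈ T y) (γ : G) :
    mul2 ty γ tx ∈ T (mul1 x γ y) :=
  hanti x y γ ⟨ty, hty, tx, htx, rfl⟩

theorem gprod_upperApprox_subset {M1 M2 G : Type} {mul1 : M1 → G → M1 → M1}
    {mul2 : M2 → G → M2 → M2} {T : M1 → Set M2}
    (hanti : ∀ (a b : M1) (α : G), aprod mul2 (T b) α (T a) ⊆ T (mul1 a α b))
    {S : Set M2} (hS : gprod mul2 S S ⊆ S) :
    gprod mul1 (upperApprox T S) (upperApprox T S) ⊆ upperApprox T S := by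
  rintro _ ⟨x, ⟨tx, htx, htxS⟩, y, ⟨ty, hty, htyS⟩, γ, rfl⟩
  exact ⟨mul2 ty γ tx, mem_of_mem_of_antiHom hanti htx hty γ, hS ⟨ty, htyS, tx, htxS, γ, rfl⟩⟩

theorem stmt6_general {M1 M2 G : Type} (mul1 : M1 → G → M1 → M1) (mul2 : M2 → G → M2 → M2)
    (T : M1 → Set M2)
    (hanti : ∀ (a b : M1) (α : G), aprod mul2 (T b) α (T a) ⊆ T (mul1 a α b)) (S : Set M2) (hS : gprod mul2 S S ⊆ S)
    (hne : (upperApprox T S).Nonempty) :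
    (upperApprox T S).Nonempty ∧
      gprod mul1 (upperApprox T S) (upperApprox T S) ⊆ upperApprox T S :=
  ⟨hne, gprod_upperApprox_subset hanti hS⟩

theorem stmt6 {M1 M2 G : Type} (mul1 : M1 → G → M1 → M1) (mul2 : M2 → G → M2 → M2)
    (hG1 : ∀ (a b c : M1) (α β : G), mul1 (mul1 a α b) β c = mul1 a α (mul1 b β c))
    (hG2 : ∀ (a b c : M2) (α β : G), mul2 (mul2 a α b) β c = mul2 a α (mul2 b β c))
    (T : M1 → Set M2) (hT : ∀ x, (T x).Nonempty)
    (hanti : ∀ (a b : M1) (α : G), aprod mul2 (T b) α (T a) ⊆ T (mul1 a α b)) (S : Set M2) (hS0 : S.Nonempty) (hS : gprod mul2 S S ⊆ S)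
    (hne : (upperApprox T S).Nonempty) :
    (upperApprox T S).Nonempty ∧
      gprod mul1 (upperApprox T S) (upperApprox T S) ⊆ upperApprox T S :=
  stmt6_general mul1 mul2 T hanti S hS hne
end

section
/- Let M₁, M₂ be Γ-semigroups and T : M₁ → P*(M₂) a strong set-valued anti-homomorphism. If B is a bi-ideal of M₂ and T_(B) is nonempty, then T_(B) is a bi-ideal of M₁: T_(B)ΓT_(B) ⊆ T_(B) and T_(B)ΓM₁ΓT_(B) ⊆ T_(B). -/
/-!
The lower approximation of a product is controlled by the anti-homomorphism property:
if `x, y` lie in `T_(X), T_(Y)` then `T(xγy) = T(y)γT(x) ⊆ YΓX`. For the bi-ideal condition one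
uses `T_(M₂) = M₁` for the middle factor and associativity in `M₂` to regroup `BΓ(M₂ΓB)` as
`(BΓM₂)ΓB`.
-/

section

variable {M M' G : Type}

theorem gprod_mono {mul : M → G → M → M} {X X' Y Y' : Set M} (hX : X ⊆ X') (hY : Y ⊆ Y') :
    gprod mul X Y ⊆ gprod mul X' Y' := by
  rintro _ ⟨x, hx, y, hy, γ, rfl⟩
  exact ⟨x, hX hx, y, hY hy, γ, rfl⟩

theorem gprod_gprod_subset_gprod_gprod {mul : M → G → M → M}
    (hassoc : ∀ (a b c : M) (α β : G), mul (mul a α b) β c = mul a α (mul b β c))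
    (X Y Z : Set M) : gprod mul X (gprod mul Y Z) ⊆ gprod mul (gprod mul X Y) Z := by
  rintro _ ⟨x, hx, _, ⟨y, hy, z, hz, β, rfl⟩, α, rfl⟩
  exact ⟨mul x α y, ⟨x, hx, y, hy, α, rfl⟩, z, hz, β, (hassoc x y z α β).symm⟩

theorem lowerApprox_mono {T : M → Set M'} {S S' : Set M'} (h : S ⊆ S') :
    lowerApprox T S ⊆ lowerApprox T S' :=
  fun _ hx => hx.trans h

theorem lowerApprox_univ (T : M → Set M') : lowerApprox T Set.univ = Set.univ :=
  Set.eq_univ_of_forall fun x => Set.subset_univ (T x)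

theorem gprod_lowerApprox_subset {mul : M → G → M → M} {mul' : M' → G → M' → M'}
    {T : M → Set M'} (hT : ∀ (a b : M) (α : G), T (mul a α b) ⊆ aprod mul' (T b) α (T a))
    (X Y : Set M') :
    gprod mul (lowerApprox T X) (lowerApprox T Y) ⊆ lowerApprox T (gprod mul' Y X) := by
  rintro _ ⟨a, ha, b, hb, α, rfl⟩ _ ht
  obtain ⟨u, hu, v, hv, rfl⟩ := hT a b α ht
  exact ⟨u, hb hu, v, ha hv, α, rfl⟩

end

theorem stmt11_general {M1 M2 G : Type} (mul1 : M1 → G → M1 → M1) (mul2 : M2 → G → M2 → M2)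
    (hG2 : ∀ (a b c : M2) (α β : G), mul2 (mul2 a α b) β c = mul2 a α (mul2 b β c))
    (T : M1 → Set M2)
    (hstrong : ∀ (a b : M1) (α : G), T (mul1 a α b) = aprod mul2 (T b) α (T a)) (B : Set M2)
    (hB1 : gprod mul2 B B ⊆ B) (hB2 : gprod mul2 (gprod mul2 B Set.univ) B ⊆ B) :
    gprod mul1 (lowerApprox T B) (lowerApprox T B) ⊆ lowerApprox T B ∧
      gprod mul1 (gprod mul1 (lowerApprox T B) Set.univ) (lowerApprox T B) ⊆ lowerApprox T B := by
  have hT : ∀ (a b : M1) (α : G), T (mul1 a α b) ⊆ aprod mul2 (T b) α (T a) :=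
    fun a b α => (hstrong a b α).subset
  refine ⟨(gprod_lowerApprox_subset hT B B).trans (lowerApprox_mono hB1), ?_⟩
  rw [← lowerApprox_univ T]
  calc gprod mul1 (gprod mul1 (lowerApprox T B) (lowerApprox T Set.univ)) (lowerApprox T B)
      ⊆ gprod mul1 (lowerApprox T (gprod mul2 Set.univ B)) (lowerApprox T B) :=
        gprod_mono (gprod_lowerApprox_subset hT B Set.univ) subset_rfl
    _ ⊆ lowerApprox T (gprod mul2 B (gprod mul2 Set.univ B)) := gprod_lowerApprox_subset hT _ _
    _ ⊆ lowerApprox T B := lowerApprox_mono ((gprod_gprod_subset_gprod_gprod hG2 _ _ _).trans hB2)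

theorem stmt11 {M1 M2 G : Type} (mul1 : M1 → G → M1 → M1) (mul2 : M2 → G → M2 → M2)
    (hG1 : ∀ (a b c : M1) (α β : G), mul1 (mul1 a α b) β c = mul1 a α (mul1 b β c))
    (hG2 : ∀ (a b c : M2) (α β : G), mul2 (mul2 a α b) β c = mul2 a α (mul2 b β c))
    (T : M1 → Set M2) (hT : ∀ x, (T x).Nonempty)
    (hstrong : ∀ (a b : M1) (α : G), T (mul1 a α b) = aprod mul2 (T b) α (T a)) (B : Set M2) (hB0 : B.Nonempty)
    (hB1 : gprod mul2 B B ⊆ B) (hB2 : gprod mul2 (gprod mul2 B Set.univ) B ⊆ B)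
    (hne : (lowerApprox T B).Nonempty) :
    gprod mul1 (lowerApprox T B) (lowerApprox T B) ⊆ lowerApprox T B ∧
      gprod mul1 (gprod mul1 (lowerApprox T B) Set.univ) (lowerApprox T B) ⊆ lowerApprox T B :=
  stmt11_general mul1 mul2 hG2 T hstrong B hB1 hB2
end

section
/- Let M₁, M₂ be Γ-semigroups and T : M₁ → P*(M₂) a set-valued anti-homomorphism. If J is an interior ideal of M₂ (JΓJ ⊆ J and M₂ΓJΓM₂ ⊆ J) and T̄(J) is nonempty, then T̄(J) is an interior ideal of M₁: M₁ΓT̄(J)ΓM₁ ⊆ T̄(J). -/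
theorem gprod_gprod_univ_subset_iff {M G : Type} (mul : M → G → M → M) (U V : Set M) :
    gprod mul (gprod mul Set.univ U) Set.univ ⊆ V ↔
      ∀ (m u n : M) (α β : G), u ∈ U → mul (mul m α u) β n ∈ V := by
  constructor
  · intro h m u n α β hu
    exact h ⟨_, ⟨m, trivial, u, hu, α, rfl⟩, n, trivial, β, rfl⟩
  · rintro h _ ⟨_, ⟨m, -, u, hu, α, rfl⟩, n, -, β, rfl⟩
    exact h m u n α β hu

section AntiHom

variable {M1 M2 G : Type} {mul1 : M1 → G → M1 → M1} {mul2 : M2 → G → M2 → M2}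
  {T : M1 → Set M2}

theorem mul_mem_of_antiHom
    (hanti : ∀ (a b : M1) (α : G), aprod mul2 (T b) α (T a) ⊆ T (mul1 a α b))
    {a b : M1} {s t : M2} (hs : s ∈ T a) (ht : t ∈ T b) (α : G) :
    mul2 t α s ∈ T (mul1 a α b) :=
  hanti a b α ⟨t, ht, s, hs, rfl⟩

theorem mul_mul_mem_upperApprox
    (hG2 : ∀ (a b c : M2) (α β : G), mul2 (mul2 a α b) β c = mul2 a α (mul2 b β c))
    (hT : ∀ x, (T x).Nonempty)
    (hanti : ∀ (a b : M1) (α : G), aprod mul2 (T b) α (T a) ⊆ T (mul1 a α b))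
    {J : Set M2} (hJ : ∀ (m j n : M2) (α β : G), j ∈ J → mul2 (mul2 m α j) β n ∈ J)
    {x : M1} (hx : x ∈ upperApprox T J) (m n : M1) (α β : G) :
    mul1 (mul1 m α x) β n ∈ upperApprox T J := by
  obtain ⟨j, hjT, hjJ⟩ := hx
  obtain ⟨t₁, ht₁⟩ := hT m
  obtain ⟨t₂, ht₂⟩ := hT n
  refine ⟨mul2 (mul2 t₂ β j) α t₁, ?_, hJ t₂ j t₁ β α hjJ⟩
  rw [hG2]
  exact mul_mem_of_antiHom hanti (mul_mem_of_antiHom hanti ht₁ hjT α) ht₂ β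

end AntiHom

theorem stmt12_general {M1 M2 G : Type} (mul1 : M1 → G → M1 → M1) (mul2 : M2 → G → M2 → M2)
    (hG2 : ∀ (a b c : M2) (α β : G), mul2 (mul2 a α b) β c = mul2 a α (mul2 b β c))
    (T : M1 → Set M2) (hT : ∀ x, (T x).Nonempty)
    (hanti : ∀ (a b : M1) (α : G), aprod mul2 (T b) α (T a) ⊆ T (mul1 a α b)) (J : Set M2)
    (hJ2 : gprod mul2 (gprod mul2 Set.univ J) Set.univ ⊆ J) :
    gprod mul1 (gprod mul1 Set.univ (upperApprox T J)) Set.univ ⊆ upperApprox T J := by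
  rw [gprod_gprod_univ_subset_iff] at hJ2 ⊢
  intro m x n α β hx
  exact mul_mul_mem_upperApprox hG2 hT hanti hJ2 hx m n α β

theorem stmt12 {M1 M2 G : Type} (mul1 : M1 → G → M1 → M1) (mul2 : M2 → G → M2 → M2)
    (hG1 : ∀ (a b c : M1) (α β : G), mul1 (mul1 a α b) β c = mul1 a α (mul1 b β c))
    (hG2 : ∀ (a b c : M2) (α β : G), mul2 (mul2 a α b) β c = mul2 a α (mul2 b β c))
    (T : M1 → Set M2) (hT : ∀ x, (T x).Nonempty)
    (hanti : ∀ (a b : M1) (α : G), aprod mul2 (T b) α (T a) ⊆ T (mul1 a α b)) (J : Set M2) (hJ0 : J.Nonempty)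
    (hJ1 : gprod mul2 J J ⊆ J) (hJ2 : gprod mul2 (gprod mul2 Set.univ J) Set.univ ⊆ J)
    (hne : (upperApprox T J).Nonempty) :
    gprod mul1 (gprod mul1 Set.univ (upperApprox T J)) Set.univ ⊆ upperApprox T J :=
  stmt12_general mul1 mul2 hG2 T hT hanti J hJ2
end

section
/- Let M₁, M₂ be Γ-semigroups and T : M₁ → P*(M₂) a strong set-valued anti-homomorphism with each T(x) nonempty. If B is a prime subset of M₂ (xαy ∈ B implies x ∈ B or y ∈ B), then T_(B) is a prime subset of M₁: for all a, b ∈ M₁ and α ∈ Γ, aαb ∈ T_(B) implies a ∈ T_(B) or b ∈ T_(B). -/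
theorem aprod_subset_iff {M G : Type} {mul : M → G → M → M} {U V B : Set M} {γ : G} :
    aprod mul U γ V ⊆ B ↔ ∀ u ∈ U, ∀ v ∈ V, mul u γ v ∈ B := by
  constructor
  · intro h u hu v hv
    exact h ⟨u, hu, v, hv, rfl⟩
  · rintro h _ ⟨u, hu, v, hv, rfl⟩
    exact h u hu v hv

theorem subset_or_subset_of_aprod_subset {M G : Type} {mul : M → G → M → M} {U V B : Set M}
    {γ : G} (hprime : ∀ (x y : M) (α : G), mul x α y ∈ B → x ∈ B ∨ y ∈ B)
    (h : aprod mul U γ V ⊆ B) : U ⊆ B ∨ V ⊆ B := by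
  by_contra! hUV
  obtain ⟨⟨u, hu, huB⟩, ⟨v, hv, hvB⟩⟩ := And.imp Set.not_subset.mp Set.not_subset.mp hUV
  rcases hprime u v γ (aprod_subset_iff.mp h u hu v hv) with huB' | hvB'
  · exact huB huB'
  · exact hvB hvB'

theorem stmt17_general {M1 M2 G : Type} (mul1 : M1 → G → M1 → M1) (mul2 : M2 → G → M2 → M2)
    (T : M1 → Set M2)
    (hstrong : ∀ (a b : M1) (α : G), T (mul1 a α b) = aprod mul2 (T b) α (T a))
    (B : Set M2) (hprime : ∀ (x y : M2) (α : G), mul2 x α y ∈ B → x ∈ B ∨ y ∈ B) :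
    ∀ (a b : M1) (α : G), mul1 a α b ∈ lowerApprox T B →
      a ∈ lowerApprox T B ∨ b ∈ lowerApprox T B := by
  intro a b α hab
  have hprod : aprod mul2 (T b) α (T a) ⊆ B := hstrong a b α ▸ hab
  exact (subset_or_subset_of_aprod_subset hprime hprod).symm

theorem stmt17 {M1 M2 G : Type} (mul1 : M1 → G → M1 → M1) (mul2 : M2 → G → M2 → M2)
    (hG1 : ∀ (a b c : M1) (α β : G), mul1 (mul1 a α b) β c = mul1 a α (mul1 b β c))
    (hG2 : ∀ (a b c : M2) (α β : G), mul2 (mul2 a α b) β c = mul2 a α (mul2 b β c))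
    (T : M1 → Set M2) (hT : ∀ x, (T x).Nonempty)
    (hstrong : ∀ (a b : M1) (α : G), T (mul1 a α b) = aprod mul2 (T b) α (T a))
    (B : Set M2) (hprime : ∀ (x y : M2) (α : G), mul2 x α y ∈ B → x ∈ B ∨ y ∈ B) :
    ∀ (a b : M1) (α : G), mul1 a α b ∈ lowerApprox T B →
      a ∈ lowerApprox T B ∨ b ∈ lowerApprox T B :=
  stmt17_general mul1 mul2 T hstrong B hprime
end
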